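/- arXiv:1102.4802 — 2 statements merged into one kernel-verified Lean document; each statement's English description precedes it below -/
import Mathlib

section
/- Let (G, C, color) be an edge-colored graph of order at least m, and let f be a function from C to the non-negative integers. If for every subset R of C the number of components of G - E_R(G) is at most m + sum over c in R of f(c), then G has an f-chromatic spanning forest with exactly m components. -/
open SimpleGraph Finset

/-- Number of connected components of a graph. -/
noncomputable def omega {V : Type*} (G : SimpleGraph V) : ℕ :=
  Nat.card G.ConnectedComponent

/-- Number of edges of `G` having color `c`. -/
noncomputable def colorCount {V C : Type*} (G : SimpleGraph V)
    (color : Sym2 V → C) (c : C) : ℕ :=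
  Nat.card {e : Sym2 V // e ∈ G.edgeSet ∧ color e = c}

/-- `G` is `f`-chromatic: each color `c` appears on at most `f c` edges. -/
def IsChromatic {V C : Type*} (G : SimpleGraph V)
    (color : Sym2 V → C) (f : C → ℕ) : Prop :=
  ∀ c, colorCount G color c ≤ f c

/-- `G - E_R(G)` : delete all edges whose color lies in `R`. -/
def delR {V C : Type*} (G : SimpleGraph V) (color : Sym2 V → C)
    (R : Finset C) : SimpleGraph V :=
  G.deleteEdges {e | color e ∈ R}

/-!
Induction on the number of edges. If `G` is `f`-chromatic, a spanning forest of `G`, thinned to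
`|V| - m` edges, has exactly `m` components by the forest formula `|E(F)| + ω(F) = |V|`.
Otherwise some colour `c₀` lies on more than `f c₀` edges, and it suffices to delete one of them
while keeping the hypothesis. If that is impossible, every such edge `e` comes with a colour set
`R_e ∌ c₀` such that `G - E_{R_e} - e` has more than `m + f(R_e)` components. Since `ω` is
supermodular (submodularity of the graphic rank, itself a consequence of the forest formula),
these excesses add up over the colour class `T` of `c₀`: with `U = ⋃ R_e`, the graph
`G - E_U - T = G - E_{U ∪ {c₀}}` has at least `m + f(U) + |T| > m + f(U ∪ {c₀})` components,
contradicting the hypothesis.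
-/

namespace SimpleGraph

variable {V : Type*} {G K F A B : SimpleGraph V}

theorem Reachable.apply_eq_of_forall_adj {α : Type*} {g : V → α}
    (hg : ∀ x y, G.Adj x y → g x = g y) {x y : V} (h : G.Reachable x y) : g x = g y := by
  obtain ⟨w⟩ := h
  induction w with
  | nil => rfl
  | cons hadj _ ih => exact (hg _ _ hadj).trans ih

theorem deleteEdges_lt_of_mem {e : Sym2 V} (he : e ∈ G.edgeSet) : G.deleteEdges {e} < G :=
  (deleteEdges_le _).lt_of_ne fun h => by
    simpa using (deleteEdges_eq_self.mp h).notMem_of_mem_left he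

theorem deleteEdges_inf_deleteEdges (s t : Set (Sym2 V)) :
    G.deleteEdges s ⊓ G.deleteEdges t = G.deleteEdges (s ∪ t) := by
  ext; simp only [inf_adj, deleteEdges_adj, Set.mem_union]; tauto

theorem deleteEdges_sup_deleteEdges (s t : Set (Sym2 V)) :
    G.deleteEdges s ⊔ G.deleteEdges t = G.deleteEdges (s ∩ t) := by
  ext; simp only [sup_adj, deleteEdges_adj, Set.mem_inter_iff]; tauto

theorem deleteEdges_sup_edge {u v : V} (h : G.Adj u v) : G.deleteEdges {s(u, v)} ⊔ edge u v = G :=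
  sdiff_sup_cancel ((edge_le_iff G).mpr (Or.inr h))

theorem omega_eq_of_reachable_eq (h : F.Reachable = G.Reachable) : omega F = omega G := by
  simp only [omega, ConnectedComponent, h]

theorem omega_bot [Finite V] : omega (⊥ : SimpleGraph V) = Nat.card V :=
  (Nat.card_eq_of_bijective _
    ⟨fun _ _ h => reachable_bot.mp (ConnectedComponent.exact h), Quot.mk_surjective⟩).symm

theorem omega_anti [Finite V] (h : A ≤ B) : omega B ≤ omega A :=
  ConnectedComponent.card_le_card_of_le h

/-- Sending `x` to its `K`-component, except that the component of `v` goes to that of `u`,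
is constant on the components of `K ⊔ edge u v` and identifies them with the other components
of `K`. -/
theorem omega_sup_edge_add_one [Finite V] {u v : V} (huv : ¬K.Reachable u v) :
    omega (K ⊔ edge u v) + 1 = omega K := by
  classical
  have huv' : (K ⊔ edge u v).Adj u v := by
    simp only [sup_adj, edge_adj, true_or, ne_eq, true_and]
    exact Or.inr fun h => huv (h ▸ Reachable.refl u)
  let g : V → K.ConnectedComponent := fun x =>
    if K.Reachable x v then K.connectedComponentMk u else K.connectedComponentMk x
  have hg : ∀ x y, (K ⊔ edge u v).Adj x y → g x = g y := by
    intro x y hxy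
    rw [sup_adj, edge_adj] at hxy
    rcases hxy with hxy | ⟨⟨rfl, rfl⟩ | ⟨rfl, rfl⟩, -⟩
    · have hv : K.Reachable x v ↔ K.Reachable y v :=
        ⟨hxy.reachable.symm.trans, hxy.reachable.trans⟩
      simp only [g, hv, ConnectedComponent.eq.mpr hxy.reachable]
    · simp [g]
    · simp [g]
  let g' : (K ⊔ edge u v).ConnectedComponent → K.ConnectedComponent :=
    ConnectedComponent.lift g fun _ _ p _ => p.reachable.apply_eq_of_forall_adj hg
  have hsection : Function.LeftInverse (ConnectedComponent.map (Hom.ofLE le_sup_left)) g' := by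
    refine ConnectedComponent.ind fun x => ?_
    by_cases hx : K.Reachable x v
    · simp only [g', g, ConnectedComponent.lift_mk, if_pos hx, ConnectedComponent.map_mk,
        Hom.ofLE_apply]
      exact ConnectedComponent.sound (huv'.reachable.trans (hx.mono le_sup_left).symm)
    · simp [g', g, hx]
  have hrange : Set.range g' = {K.connectedComponentMk v}ᶜ := by
    have hg_ne : ∀ y, g y ≠ K.connectedComponentMk v := by
      intro y
      by_cases hy : K.Reachable y v <;> simp [g, hy, huv]
    refine (Set.range_subset_iff.mpr <| ConnectedComponent.ind hg_ne).antisymm ?_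
    refine ConnectedComponent.ind fun x hx => ⟨(K ⊔ edge u v).connectedComponentMk x, ?_⟩
    have hx : ¬K.Reachable x v := fun h => hx (ConnectedComponent.sound h)
    simp [g', g, hx]
  have hinj : Function.Injective g' := hsection.injective
  rw [omega, ← Nat.card_range_of_injective hinj, hrange, Nat.card_coe_set_eq, omega,
    ← Set.ncard_add_ncard_compl {K.connectedComponentMk v}, Set.ncard_singleton, add_comm]

theorem IsAcyclic.ncard_edgeSet_add_omega [Finite V] (hF : F.IsAcyclic) :
    F.edgeSet.ncard + omega F = Nat.card V := by
  induction F using WellFoundedLT.induction with | ind F ih => ?_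
  obtain hE | ⟨e, he⟩ := F.edgeSet.eq_empty_or_nonempty
  · rw [hE, edgeSet_eq_empty.mp hE, Set.ncard_empty, zero_add, omega_bot]
  induction e using Sym2.ind with | h u v => ?_
  have hbridge : ¬(F.deleteEdges {s(u, v)}).Reachable u v :=
    isBridge_iff.mp (isAcyclic_iff_forall_adj_isBridge.mp hF he)
  have hcomp := omega_sup_edge_add_one hbridge
  rw [deleteEdges_sup_edge he] at hcomp
  have hedges : (F.deleteEdges {s(u, v)}).edgeSet.ncard + 1 = F.edgeSet.ncard := by
    rw [edgeSet_deleteEdges, Set.ncard_sdiff_singleton_add_one he]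
  have hK := ih _ (deleteEdges_lt_of_mem he) (hF.anti (deleteEdges_le _))
  omega

theorem ncard_edgeSet_add_omega_le [Finite V] (hFA : F ≤ A) (hF : F.IsAcyclic) :
    F.edgeSet.ncard + omega A ≤ Nat.card V :=
  hF.ncard_edgeSet_add_omega ▸ Nat.add_le_add_left (omega_anti hFA) _

theorem omega_add_omega_le [Finite V] (A B : SimpleGraph V) :
    omega A + omega B ≤ omega (A ⊔ B) + omega (A ⊓ B) := by
  obtain ⟨F₀, hF₀, hF₀_acyc, hF₀_reach⟩ := (A ⊓ B).exists_isAcyclic_reachable_eq_le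
  obtain ⟨F₁, hF₀₁, hF₁, hF₁_acyc, hF₁_reach⟩ :=
    (A ⊔ B).exists_isAcyclic_reachable_eq_le_of_le_of_isAcyclic
      (hF₀.trans (inf_le_left.trans le_sup_left)) hF₀_acyc
  have h₀ := hF₀_acyc.ncard_edgeSet_add_omega
  have h₁ := hF₁_acyc.ncard_edgeSet_add_omega
  rw [omega_eq_of_reachable_eq hF₀_reach] at h₀
  rw [omega_eq_of_reachable_eq hF₁_reach] at h₁
  have hA := ncard_edgeSet_add_omega_le inf_le_right
    (hF₁_acyc.anti inf_le_left : (F₁ ⊓ A).IsAcyclic)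
  have hB := ncard_edgeSet_add_omega_le inf_le_right
    (hF₁_acyc.anti inf_le_left : (F₁ ⊓ B).IsAcyclic)
  have hsplit : (F₁ ⊓ A).edgeSet.ncard + (F₁ ⊓ B).edgeSet.ncard
      = F₁.edgeSet.ncard + (F₁ ⊓ (A ⊓ B)).edgeSet.ncard := by
    have hsup : F₁ ⊓ A ⊔ F₁ ⊓ B = F₁ := by rw [← inf_sup_left, inf_eq_left.mpr hF₁]
    rw [← Set.ncard_union_add_ncard_inter, ← edgeSet_sup, ← edgeSet_inf, hsup,
      ← inf_inf_distrib_left]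
  have hF₀_le : F₀.edgeSet.ncard ≤ (F₁ ⊓ (A ⊓ B)).edgeSet.ncard :=
    Set.ncard_le_ncard (edgeSet_mono (le_inf hF₀₁ hF₀))
  omega

theorem exists_isAcyclic_le_omega_eq [Finite V] {m : ℕ} (hGm : omega G ≤ m)
    (hm : m ≤ Nat.card V) : ∃ F ≤ G, F.IsAcyclic ∧ omega F = m := by
  obtain ⟨F₁, hF₁, hF₁_acyc, hF₁_reach⟩ := G.exists_isAcyclic_reachable_eq_le
  have h₁ := hF₁_acyc.ncard_edgeSet_add_omega
  rw [omega_eq_of_reachable_eq hF₁_reach] at h₁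
  obtain ⟨S, hS, hS_card⟩ := Set.exists_subset_card_eq (s := F₁.edgeSet) (n := Nat.card V - m)
    (by omega)
  have hF : (F₁.deleteEdges (F₁.edgeSet \ S)).IsAcyclic := hF₁_acyc.anti (deleteEdges_le _)
  refine ⟨_, (deleteEdges_le _).trans hF₁, hF, ?_⟩
  have := hF.ncard_edgeSet_add_omega
  rw [edgeSet_deleteEdges, Set.sdiff_sdiff_cancel_left hS, hS_card] at this
  omega

variable {C : Type*} (G) (color : Sym2 V → C) (f : C → ℕ) (m : ℕ)

noncomputable def excess (R : Finset C) (X : Set (Sym2 V)) : ℤ :=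
  omega (G.deleteEdges ({e | color e ∈ R} ∪ X)) - (m + ∑ c ∈ R, f c : ℕ)

variable {G color f m}

theorem excess_empty_nonpos_iff {R : Finset C} :
    G.excess color f m R ∅ ≤ 0 ↔ omega (delR G color R) ≤ m + ∑ c ∈ R, f c := by
  rw [excess, Set.union_empty, sub_nonpos, Nat.cast_le, delR]

theorem excess_deleteEdges (R : Finset C) (X Y : Set (Sym2 V)) :
    (G.deleteEdges X).excess color f m R Y = G.excess color f m R (X ∪ Y) := by
  rw [excess, excess, deleteEdges_deleteEdges, Set.union_left_comm]

theorem color_notMem_of_excess_pos {R : Finset C} {e : Sym2 V}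
    (hR : G.excess color f m R ∅ ≤ 0) (he : 0 < G.excess color f m R {e}) : color e ∉ R := by
  intro hc
  rw [excess, Set.union_eq_self_of_subset_right
    (show {e} ⊆ {e' | color e' ∈ R} from Set.singleton_subset_iff.mpr hc)] at he
  rw [excess, Set.union_empty] at hR
  exact he.not_ge hR

theorem excess_add_excess_le [Finite V] [DecidableEq C] {R₁ R₂ : Finset C}
    {X₁ X₂ : Set (Sym2 V)} (h₁ : ∀ e ∈ X₁, color e ∉ R₂) (h₂ : ∀ e ∈ X₂, color e ∉ R₁)
    (hX : Disjoint X₁ X₂) :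
    G.excess color f m R₁ X₁ + G.excess color f m R₂ X₂ ≤
      G.excess color f m (R₁ ∪ R₂) (X₁ ∪ X₂) + G.excess color f m (R₁ ∩ R₂) ∅ := by
  have hunion : ({e | color e ∈ R₁} ∪ X₁) ∪ ({e | color e ∈ R₂} ∪ X₂) =
      {e | color e ∈ R₁ ∪ R₂} ∪ (X₁ ∪ X₂) := by
    ext e; simp only [Set.mem_union, Set.mem_ofPred_eq, Finset.mem_union]; tauto
  have hinter : ({e | color e ∈ R₁} ∪ X₁) ∩ ({e | color e ∈ R₂} ∪ X₂) =
      {e | color e ∈ R₁ ∩ R₂} ∪ ∅ := by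
    ext e
    simp only [Set.mem_union, Set.mem_inter_iff, Set.mem_ofPred_eq, Finset.mem_inter,
      Set.union_empty]
    have := h₁ e; have := h₂ e; have := hX.notMem_of_mem_left (a := e)
    tauto
  have hcomp := omega_add_omega_le (G.deleteEdges ({e | color e ∈ R₁} ∪ X₁))
    (G.deleteEdges ({e | color e ∈ R₂} ∪ X₂))
  rw [deleteEdges_sup_deleteEdges, deleteEdges_inf_deleteEdges, hunion, hinter] at hcomp
  have hf : ∑ c ∈ R₁ ∪ R₂, f c + ∑ c ∈ R₁ ∩ R₂, f c = ∑ c ∈ R₁, f c + ∑ c ∈ R₂, f c :=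
    Finset.sum_union_inter
  simp only [excess, Nat.cast_add]
  omega

theorem sum_excess_le [Finite V] [DecidableEq C] (hG : ∀ R, G.excess color f m R ∅ ≤ 0)
    {c₀ : C} {R : Sym2 V → Finset C} {T : Finset (Sym2 V)} (hT : T.Nonempty)
    (hT_color : ∀ e ∈ T, color e = c₀) (hR : ∀ e ∈ T, c₀ ∉ R e) :
    ∑ e ∈ T, G.excess color f m (R e) {e} ≤ G.excess color f m (T.sup R) T := by
  induction hT using Finset.Nonempty.cons_induction with
  | singleton e => simp
  | cons e T he hT ih =>
    simp only [Finset.mem_cons, forall_eq_or_imp] at hT_color hR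
    have hU : c₀ ∉ T.sup R := by
      simpa only [Finset.mem_sup, not_exists, not_and] using hR.2
    have hstep := excess_add_excess_le (G := G) (f := f) (m := m) (R₁ := R e) (R₂ := T.sup R)
      (X₁ := {e}) (X₂ := ↑T)
      (by simpa [hT_color.1] using hU) (fun e' he' => hT_color.2 e' he' ▸ hR.1)
      (by simpa using he)
    rw [Finset.sum_cons, Finset.sup_cons, Finset.sup_eq_union, Finset.coe_cons, Set.insert_eq]
    linarith [ih hT_color.2 hR.2, hG (R e ∩ T.sup R)]

theorem excess_colorClass [DecidableEq C] {c₀ : C} {U : Finset C} (hU : c₀ ∉ U)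
    {T : Finset (Sym2 V)} (hT : ∀ e, e ∈ T ↔ e ∈ G.edgeSet ∧ color e = c₀) :
    G.excess color f m U T = G.excess color f m (insert c₀ U) ∅ + f c₀ := by
  have hgraph : G.deleteEdges ({e | color e ∈ U} ∪ ↑T) =
      G.deleteEdges ({e | color e ∈ insert c₀ U} ∪ ∅) := by
    rw [deleteEdges_eq_inter_edgeSet, deleteEdges_eq_inter_edgeSet (_ ∪ ∅)]
    congr 1
    ext e
    simp only [Set.mem_inter_iff, Set.mem_union, Set.mem_ofPred_eq, Finset.mem_coe, hT,
      Finset.mem_insert, Set.union_empty]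
    tauto
  rw [excess, excess, hgraph, Finset.sum_insert hU]
  push_cast
  ring

theorem exists_deleteEdges_componentBound [Finite V] {c₀ : C}
    (h : ∀ R : Finset C, omega (delR G color R) ≤ m + ∑ c ∈ R, f c)
    (hc₀ : f c₀ < colorCount G color c₀) :
    ∃ e ∈ G.edgeSet, ∀ R : Finset C,
      omega (delR (G.deleteEdges {e}) color R) ≤ m + ∑ c ∈ R, f c := by
  classical
  by_contra! hbad
  have hG : ∀ R, G.excess color f m R ∅ ≤ 0 := fun R => excess_empty_nonpos_iff.mpr (h R)
  have hT_finite : {e | e ∈ G.edgeSet ∧ color e = c₀}.Finite := Set.toFinite _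
  set T := hT_finite.toFinset
  have hT : ∀ e, e ∈ T ↔ e ∈ G.edgeSet ∧ color e = c₀ := fun _ => hT_finite.mem_toFinset
  have hT_card : colorCount G color c₀ = T.card := Nat.card_eq_card_finite_toFinset hT_finite
  have hpos : ∀ e ∈ T, ∃ R, 0 < G.excess color f m R {e} := by
    intro e he
    obtain ⟨R, hR⟩ := hbad e ((hT e).mp he).1
    refine ⟨R, ?_⟩
    rw [← Set.union_empty {e}, ← excess_deleteEdges]
    exact lt_of_not_ge (mt excess_empty_nonpos_iff.mp hR.not_ge)
  choose! R hR using hpos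
  have hR_c₀ : ∀ e ∈ T, c₀ ∉ R e := fun e he =>
    ((hT e).mp he).2 ▸ color_notMem_of_excess_pos (hG (R e)) (hR e he)
  have hU : c₀ ∉ T.sup R := by
    simpa only [Finset.mem_sup, not_exists, not_and] using hR_c₀
  have hsum := sum_excess_le hG (T := T) (Finset.card_pos.mp (by omega))
    (fun e he => ((hT e).mp he).2) hR_c₀
  have hcard : (T.card : ℤ) ≤ ∑ e ∈ T, G.excess color f m (R e) {e} := by
    simpa using Finset.card_nsmul_le_sum T _ 1 fun e he => Int.add_one_le_iff.mpr (hR e he)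
  have := hG (insert c₀ (T.sup R))
  rw [excess_colorClass hU hT] at hsum
  omega

end SimpleGraph

theorem IsChromatic.anti {V C : Type*} [Finite V] {F G : SimpleGraph V} {color : Sym2 V → C}
    {f : C → ℕ} (hG : IsChromatic G color f) (hFG : F ≤ G) : IsChromatic F color f :=
  fun c => le_trans (Nat.card_mono (Set.toFinite {e | e ∈ G.edgeSet ∧ color e = c})
    fun _ he => ⟨edgeSet_mono hFG he.1, he.2⟩) (hG c)

theorem stmt3 {V C : Type*} [Fintype V] (G : SimpleGraph V) (color : Sym2 V → C)
    (f : C → ℕ) (m : ℕ) (hm : m ≤ Fintype.card V)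
    (h : ∀ R : Finset C, omega (delR G color R) ≤ m + ∑ c ∈ R, f c) :
    ∃ F : SimpleGraph V, F ≤ G ∧ F.IsAcyclic ∧ omega F = m ∧
      IsChromatic F color f := by
  rw [← Nat.card_eq_fintype_card] at hm
  induction G using WellFoundedLT.induction with | ind G ih => ?_
  by_cases hG : IsChromatic G color f
  · obtain ⟨F, hFG, hF, hFm⟩ := exists_isAcyclic_le_omega_eq (by simpa [delR] using h ∅) hm
    exact ⟨F, hFG, hF, hFm, hG.anti hFG⟩
  · obtain ⟨c₀, hc₀⟩ := not_forall.mp hG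
    obtain ⟨e, he, he_del⟩ := exists_deleteEdges_componentBound h (lt_of_not_ge hc₀)
    obtain ⟨F, hF, hrest⟩ := ih _ (deleteEdges_lt_of_mem he) he_del
    exact ⟨F, hF.trans (deleteEdges_le _), hrest⟩
end

section
/- Let G be an edge-colored connected graph of order n and 1 <= k <= n-1. G has a spanning tree using at least k distinct colors if and only if G has a heterochromatic spanning forest with exactly n - k components. -/
/-!
A forest on `n` vertices with `m` edges has exactly `n - m` components: adding an edge between
two components of a graph merges them into one, and every edge of a forest is a bridge. So a
spanning forest has `n - k` components iff it has `k` edges. Given a spanning tree with at least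
`k` colours, one edge of each of `k` colours spans a heterochromatic subforest with `k` edges.
Conversely, a heterochromatic forest with `k` edges extends to a spanning tree of the connected
graph, and that tree still carries the `k` distinct colours of the forest.
-/

open SimpleGraph Finset

lemma Set.exists_subset_injOn_ncard_eq {α β : Type*} {s : Set α} {f : α → β} {k : ℕ}
    (hk : k ≤ (f '' s).ncard) : ∃ t ⊆ s, Set.InjOn f t ∧ t.ncard = k := by
  obtain ⟨c, hcs, rfl⟩ := Set.exists_subset_card_eq hk
  obtain ⟨t, hts, hbij⟩ := Set.exists_subset_bijOn (s ∩ f ⁻¹' c) f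
  refine ⟨t, hts.trans Set.inter_subset_left, hbij.injOn, ?_⟩
  rw [← hbij.injOn.ncard_image, hbij.image_eq, Set.image_inter_preimage, Set.inter_eq_right.2 hcs]

namespace SimpleGraph

variable {V : Type*} {G : SimpleGraph V} {u v : V}

lemma Reachable.of_sup_edge {a b : V} (h : (G ⊔ edge u v).Reachable a b) :
    G.Reachable a b ∨ (G.Reachable a u ∧ G.Reachable v b) ∨
      (G.Reachable a v ∧ G.Reachable u b) := by
  obtain ⟨p⟩ := h
  induction p with
  | nil => exact .inl .rfl
  | @cons a c b hac _ ih =>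
    rw [sup_adj, edge_adj] at hac
    rcases hac with hac | ⟨⟨rfl, rfl⟩ | ⟨rfl, rfl⟩, -⟩
    · have := hac.reachable
      rcases ih with h | ⟨h₁, h₂⟩ | ⟨h₁, h₂⟩
      exacts [.inl (this.trans h), .inr (.inl ⟨this.trans h₁, h₂⟩),
        .inr (.inr ⟨this.trans h₁, h₂⟩)]
    · rcases ih with h | ⟨h₁, h₂⟩ | ⟨-, h₂⟩
      exacts [.inr (.inl ⟨.rfl, h⟩), .inl (h₁.symm.trans h₂), .inl h₂]
    · rcases ih with h | ⟨-, h₂⟩ | ⟨h₁, h₂⟩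
      exacts [.inr (.inr ⟨.rfl, h⟩), .inl h₂, .inl (h₁.symm.trans h₂)]

lemma card_connectedComponent_sup_edge [Finite V] (h : ¬G.Reachable u v) :
    Nat.card (G ⊔ edge u v).ConnectedComponent + 1 = Nat.card G.ConnectedComponent := by
  set φ := ConnectedComponent.map (Hom.ofLE (le_sup_left : G ≤ G ⊔ edge u v))
  set cv := G.connectedComponentMk v
  have hφ : ∀ x, φ (G.connectedComponentMk x) = (G ⊔ edge u v).connectedComponentMk x :=
    fun _ => rfl
  have huv : (G ⊔ edge u v).Reachable u v :=
    Adj.reachable (.inr ((edge_adj ..).2 ⟨.inl ⟨rfl, rfl⟩, fun huv => h (huv ▸ .rfl)⟩))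
  have himage : φ '' {cv}ᶜ = Set.univ := by
    refine Set.eq_univ_of_forall fun c => ?_
    induction c using ConnectedComponent.ind with | h x =>
    by_cases hx : G.connectedComponentMk x = cv
    · refine ⟨G.connectedComponentMk u, fun hu => h (ConnectedComponent.eq.1 hu), ?_⟩
      rw [hφ, ConnectedComponent.eq]
      exact huv.trans ((ConnectedComponent.eq.1 hx).mono le_sup_left).symm
    · exact ⟨_, hx, rfl⟩
  have hinj : Set.InjOn φ {cv}ᶜ := by
    rintro c₁ hc₁ c₂ hc₂ hc
    induction c₁ using ConnectedComponent.ind with | h x =>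
    induction c₂ using ConnectedComponent.ind with | h y =>
    simp only [Set.mem_compl_singleton_iff, ne_eq, ConnectedComponent.eq, cv] at hc₁ hc₂
    rw [hφ, hφ, ConnectedComponent.eq] at hc
    rcases hc.of_sup_edge with hxy | ⟨-, hvy⟩ | ⟨hxv, -⟩
    exacts [ConnectedComponent.eq.2 hxy, (hc₂ hvy.symm).elim, (hc₁ hxv).elim]
  rw [← Set.ncard_univ, ← himage, hinj.ncard_image, Set.compl_eq_univ_sdiff,
    Set.ncard_sdiff_singleton_add_one (Set.mem_univ _), Set.ncard_univ]

lemma card_connectedComponent_bot :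
    Nat.card (⊥ : SimpleGraph V).ConnectedComponent = Nat.card V :=
  (Nat.card_eq_of_bijective _ ⟨fun _ _ h => by simpa using ConnectedComponent.eq.1 h,
    Quot.mk_surjective⟩).symm

theorem IsAcyclic.card_connectedComponent_add_ncard_edgeSet [Finite V] (hG : G.IsAcyclic) :
    Nat.card G.ConnectedComponent + G.edgeSet.ncard = Nat.card V := by
  induction hm : G.edgeSet.ncard generalizing G with
  | zero =>
    rw [Set.ncard_eq_zero, edgeSet_eq_empty] at hm
    simp [hm, card_connectedComponent_bot]
  | succ m ih =>
    obtain ⟨e, he⟩ := Set.nonempty_of_ncard_ne_zero (by omega : G.edgeSet.ncard ≠ 0)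
    induction e with | h u v =>
    have hbridge : ¬(G.deleteEdges {s(u, v)}).Reachable u v :=
      isBridge_iff.1 (isAcyclic_iff_forall_adj_isBridge.1 hG he)
    have hdel : (G.deleteEdges {s(u, v)}).edgeSet.ncard = m := by
      have := Set.ncard_sdiff_singleton_add_one he
      rw [edgeSet_deleteEdges]
      omega
    have hsup : G.deleteEdges {s(u, v)} ⊔ edge u v = G := by
      rw [show G.deleteEdges {s(u, v)} = G \ edge u v from rfl, sdiff_sup_self,
        sup_edge_of_adj _ he]
    have hmerge := card_connectedComponent_sup_edge hbridge
    rw [hsup] at hmerge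
    have := ih (hG.anti (deleteEdges_le _)) hdel
    omega

lemma exists_le_injOn_edgeSet_ncard_eq {C : Type*} (color : Sym2 V → C) {k : ℕ}
    (hk : k ≤ (color '' G.edgeSet).ncard) :
    ∃ F ≤ G, Set.InjOn color F.edgeSet ∧ F.edgeSet.ncard = k := by
  obtain ⟨S, hSG, hinj, hS⟩ := Set.exists_subset_injOn_ncard_eq hk
  have hedge : (fromEdgeSet S).edgeSet = S := by
    rw [edgeSet_fromEdgeSet, sdiff_eq_left]
    exact Set.subset_compl_iff_disjoint_right.1 (hSG.trans G.edgeSet_subset_compl_diagSet)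
  refine ⟨fromEdgeSet S, edgeSet_subset_edgeSet.1 ?_, ?_, ?_⟩ <;> rwa [hedge]

end SimpleGraph

theorem stmt11_general {V C : Type*} [Fintype V] (G : SimpleGraph V) (color : Sym2 V → C)
    (n k : ℕ) (hn : Fintype.card V = n) (hG : G.Connected)
    (hk2 : k ≤ n - 1) :
    (∃ T : SimpleGraph V, T ≤ G ∧ T.IsTree ∧ k ≤ Nat.card (color '' T.edgeSet)) ↔
      ∃ F : SimpleGraph V, F ≤ G ∧ F.IsAcyclic ∧ omega F = n - k ∧
        Set.InjOn color F.edgeSet := by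
  rw [← Nat.card_eq_fintype_card] at hn
  constructor
  · rintro ⟨T, hTG, hT, hk⟩
    rw [Nat.card_coe_set_eq] at hk
    obtain ⟨F, hFT, hinj, hFk⟩ := exists_le_injOn_edgeSet_ncard_eq color hk
    have hF := hT.isAcyclic.anti hFT
    have hforest := hF.card_connectedComponent_add_ncard_edgeSet
    refine ⟨F, hFT.trans hTG, hF, by unfold omega; omega, hinj⟩
  · rintro ⟨F, hFG, hF, hω, hinj⟩
    obtain ⟨T, hFT, hTG, hT⟩ := hG.exists_isTree_le_of_le_of_isAcyclic hFG hF
    have hforest := hF.card_connectedComponent_add_ncard_edgeSet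
    unfold omega at hω
    refine ⟨T, hTG, hT, ?_⟩
    calc k = (color '' F.edgeSet).ncard := by rw [hinj.ncard_image]; omega
      _ ≤ (color '' T.edgeSet).ncard :=
        Set.ncard_le_ncard (Set.image_mono (edgeSet_mono hFT)) (T.edgeSet.toFinite.image _)
      _ = Nat.card (color '' T.edgeSet) := (Nat.card_coe_set_eq _).symm

theorem stmt11 {V C : Type*} [Fintype V] (G : SimpleGraph V) (color : Sym2 V → C)
    (n k : ℕ) (hn : Fintype.card V = n) (hG : G.Connected)
    (hk1 : 1 ≤ k) (hk2 : k ≤ n - 1) :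
    (∃ T : SimpleGraph V, T ≤ G ∧ T.IsTree ∧ k ≤ Nat.card (color '' T.edgeSet)) ↔
      ∃ F : SimpleGraph V, F ≤ G ∧ F.IsAcyclic ∧ omega F = n - k ∧
        Set.InjOn color F.edgeSet :=
  stmt11_general G color n k hn hG hk2
end
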